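/- There is c* > 0 such that for every ε ∈ (0,1] and every σ ∈ (0, c*] there is C > 0 such that for every c > 0 there is n₀ ∈ ℕ with the following property for all n ≥ n₀. Let λ and d satisfy (log n)^{−3} ≤ λ ≤ c*, 10³·d ≤ λ·n, d ≥ C·log n and dn even; let m be an integer with ε·d·n ≤ m ≤ n^{1+σ}; set δ = 2m/n and suppose λ·δ ≥ C·log n; set p = m·(binom(n,2) − dn/2)^{−1}. Let K ~ G_d(n), form E by including each element of [n]^(2)∖E(K) independently with probability p, and let F = K + E. Then with probability at least 1 − c·n^{−14} the following holds: for each U ⊆ [n] with |U| ≤ λn/(100·δ·log n), if there is some U' ⊆ [n] with |U'| ≤ 4|U|/d and U ⊆ U' ∪ N_K(U'), then e_{F∖K}(U) ≤ (λ/(2·log n))·δ·|U|. (Lemma 6.6.) -/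

import Mathlib

open scoped Classical ENNReal

noncomputable section

namespace Sandwich

variable {n : ℕ}

/-- The degree of the vertex `v` in the graph `G`. -/
def deg (G : SimpleGraph (Fin n)) (v : Fin n) : ℕ := Nat.card (G.neighborSet v)

/-- `G` is a `d`-regular graph. -/
def IsRegularGraph (G : SimpleGraph (Fin n)) (d : ℕ) : Prop := ∀ v, deg G v = d

/-- The number of edges of `G`. -/
def edgeCount (G : SimpleGraph (Fin n)) : ℕ := G.edgeSet.ncard

/-- The probability of the event `P` under the probability mass function `μ`. -/
def prEvent {α : Type*} (μ : PMF α) (P : α → Prop) : ℝ≥0∞ := ∑' a, if P a then μ a else 0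

/-- `μ` is the uniform distribution on the set `S`. -/
def IsUniformOn {α : Type*} (μ : PMF α) (S : Set α) : Prop :=
  ∀ a, μ a = if a ∈ S then (S.ncard : ℝ≥0∞)⁻¹ else 0

/-- `P` lists the `k+1` vertices of a `(G₁,G₂)`-alternating path of length `k`: the vertices
are distinct and consecutive vertices are joined by an edge of `G₁` (for steps of even index)
or of `G₂` (for steps of odd index). -/
def IsAltSeq (G₁ G₂ : SimpleGraph (Fin n)) (k : ℕ) (P : Fin (k + 1) → Fin n) : Prop :=
  Function.Injective P ∧
    ∀ i : Fin k, if (i : ℕ) % 2 = 0 then G₁.Adj (P i.castSucc) (P i.succ)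
      else G₂.Adj (P i.castSucc) (P i.succ)

/-- The number of `(G₁,G₂)`-alternating `x,y`-paths of length `k` with no internal vertex
in `Z`. -/
def altPathCount (G₁ G₂ : SimpleGraph (Fin n)) (k : ℕ) (x y : Fin n) (Z : Set (Fin n)) : ℕ :=
  Nat.card {P : Fin (k + 1) → Fin n // IsAltSeq G₁ G₂ k P ∧ P 0 = x ∧ P (Fin.last k) = y ∧
    ∀ i : Fin (k + 1), i ≠ 0 → i ≠ Fin.last k → P i ∉ Z}

/-- The number of `(G₁,G₂)`-alternating paths of length `k` starting at `x`. -/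
def altStartCount (G₁ G₂ : SimpleGraph (Fin n)) (k : ℕ) (x : Fin n) : ℕ :=
  Nat.card {P : Fin (k + 1) → Fin n // IsAltSeq G₁ G₂ k P ∧ P 0 = x}

/-- The external neighbourhood `N_G(U)` of a set of vertices `U`. -/
def nbhd (G : SimpleGraph (Fin n)) (U : Set (Fin n)) : Set (Fin n) :=
  {v | v ∉ U ∧ ∃ u ∈ U, G.Adj u v}

/-- `e_G(U)`, the number of edges of `G` with both endpoints in `U`. -/
def edgesWithin (G : SimpleGraph (Fin n)) (U : Set (Fin n)) : ℕ :=
  {e ∈ G.edgeSet | ∀ v ∈ e, v ∈ U}.ncard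

/-- `e_G(U,V) = |{(u,v) : u ∈ U, v ∈ V, uv ∈ E(G)}|`. -/
def edgesBetween (G : SimpleGraph (Fin n)) (U V : Set (Fin n)) : ℕ :=
  {p : Fin n × Fin n | p.1 ∈ U ∧ p.2 ∈ V ∧ G.Adj p.1 p.2}.ncard

/-- `|E_{≥2,G}(U)|`, the number of edges `xy ∈ E(G)` with `x ∈ U`, `y ∉ U` such that some
`x' ∈ U ∖ {x}` also satisfies `x'y ∈ E(G)`. -/
def E2count (G : SimpleGraph (Fin n)) (U : Set (Fin n)) : ℕ :=
  {e : Sym2 (Fin n) | e ∈ G.edgeSet ∧ ∃ x y, e = s(x, y) ∧ x ∈ U ∧ y ∉ U ∧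
    ∃ x' ∈ U, x' ≠ x ∧ G.Adj x' y}.ncard

/-- `Σ_{u ∈ N_{F∖K}(v)} Σ_{u' ∈ N_K(u)} d_{F∖K}(u')`. -/
def doubleDegSum (F K : SimpleGraph (Fin n)) (v : Fin n) : ℝ :=
  ∑ u : Fin n, if (F \ K).Adj v u then
    ∑ u' : Fin n, if K.Adj u u' then (deg (F \ K) u' : ℝ) else 0
  else 0

/-- `μ` is the law of the binomial random graph `G(n,p)`. -/
def IsGnp (μ : PMF (SimpleGraph (Fin n))) (p : ℝ) : Prop :=
  ∀ G, μ G = ENNReal.ofReal (p ^ edgeCount G * (1 - p) ^ (n.choose 2 - edgeCount G))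

/-- `μ` is the law of `G(n,p)`, where `p` is truncated to `[0,1]` (so that `G(n,p)` is the
empty graph for `p ≤ 0` and the complete graph for `p ≥ 1`). -/
def IsGnpLaw (μ : PMF (SimpleGraph (Fin n))) (p : ℝ) : Prop :=
  IsGnp μ (max 0 (min p 1))

/-- `μ` is the law of `K + E`, where `E` includes each pair not in `E(K)` independently with
probability `p`. -/
def IsAddGnp (μ : PMF (SimpleGraph (Fin n))) (K : SimpleGraph (Fin n)) (p : ℝ) : Prop :=
  ∀ F, μ F = if K ≤ F then
      ENNReal.ofReal (p ^ (edgeCount F - edgeCount K) * (1 - p) ^ (n.choose 2 - edgeCount F))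
    else 0

/-- `ν` is the joint law of `(K, F)` where `K ~ G_d(n)` is a uniformly random `d`-regular graph
and `F = K + E`, `E` including each pair not in `E(K)` independently with probability `p`. -/
def IsRegAddGnp (ν : PMF (SimpleGraph (Fin n) × SimpleGraph (Fin n))) (d : ℕ) (p : ℝ) : Prop :=
  ∀ w, ν w = if IsRegularGraph w.1 d ∧ w.1 ≤ w.2 then
      ({G : SimpleGraph (Fin n) | IsRegularGraph G d}.ncard : ℝ≥0∞)⁻¹ *
        ENNReal.ofReal (p ^ (edgeCount w.2 - edgeCount w.1) *
          (1 - p) ^ (n.choose 2 - edgeCount w.2))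
    else 0

/-- `ν` is the joint law of an independent pair `(K, F)` with `K ~ G_d(n)` and `F ~ G(n,q)`. -/
def IsRegIndepGnp (ν : PMF (SimpleGraph (Fin n) × SimpleGraph (Fin n))) (d : ℕ) (q : ℝ) :
    Prop :=
  ∀ w, ν w = (if IsRegularGraph w.1 d then
      ({G : SimpleGraph (Fin n) | IsRegularGraph G d}.ncard : ℝ≥0∞)⁻¹ else 0) *
      ENNReal.ofReal (q ^ edgeCount w.2 * (1 - q) ^ (n.choose 2 - edgeCount w.2))

/-!
If the property fails at `(K, F)`, there are `U` with `|U| = u` containing more than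
`λδu/(2 log n) ≥ 50u` edges of `F ∖ K`, and `U'` with `|U'| ≤ 4u/d` and `U ⊆ U' ∪ N_K(U')`;
as `U' ≠ ∅`, `u ≥ d/4 ≥ 25 log n`. For fixed `K` there are at most `n^{8u/d}` choices of `U'`,
`2^{8u}` of `U` inside `U' ∪ N_K(U')` (at most `(d+1)|U'| ≤ 8u` vertices), and
`binom(binom(u+1,2), 50u)` of a set `S` of `50u` non-edges of `K` inside `U`; each `S ⊆ E(F)`
has probability `p^{50u}`. Since `up ≤ λ/(50 log n) ≤ 1`, the last two factors contribute at
most `(e(u+1)p/100)^{50u} ≤ e^{-50u}`, which beats `n^{8u/d} 2^{8u} ≤ e^{7u}` with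
`n^{-1000} 2^{-u}` to spare. A union bound over `K`, `u`, `U'`, `U`, `S` bounds the failure
probability by `2 n^{-1000} ≤ c n^{-14}`.
-/

open Finset SimpleGraph

section Probability

variable {α β : Type*}

lemma prEvent_add_prEvent_not (μ : PMF α) (P : α → Prop) :
    prEvent μ P + prEvent μ (¬ P ·) = 1 := by
  rw [prEvent, prEvent, ← ENNReal.tsum_add, ← PMF.tsum_coe μ]
  congr 1 with a
  by_cases h : P a <;> simp [h]

lemma ofReal_one_sub_le_prEvent (μ : PMF α) (P : α → Prop) {x : ℝ} (hx : 0 ≤ x)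
    (h : prEvent μ (¬ P ·) ≤ ENNReal.ofReal x) : ENNReal.ofReal (1 - x) ≤ prEvent μ P := by
  have hP := prEvent_add_prEvent_not μ P
  calc ENNReal.ofReal (1 - x) = 1 - ENNReal.ofReal x := by
        rw [ENNReal.ofReal_sub 1 hx, ENNReal.ofReal_one]
    _ ≤ 1 - prEvent μ (¬ P ·) := tsub_le_tsub_left h 1
    _ = prEvent μ P := by
        rw [← hP, ENNReal.add_sub_cancel_right]
        exact ne_top_of_le_ne_top ENNReal.one_ne_top (hP ▸ le_add_self)

lemma prEvent_le_sum [Fintype α] (μ : PMF α) {Q : α → Prop} {ι : Type*} (A : Finset ι)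
    (R : ι → α → Prop) (h : ∀ a, μ a ≠ 0 → Q a → ∃ i ∈ A, R i a) :
    prEvent μ Q ≤ ∑ i ∈ A, prEvent μ (R i) := by
  simp only [prEvent, tsum_fintype]
  rw [sum_comm]
  refine sum_le_sum fun a _ => ?_
  by_cases hQ : Q a
  · by_cases hμ : μ a = 0
    · simp [hμ]
    · obtain ⟨i, hiA, hiR⟩ := h a hμ hQ
      rw [if_pos hQ]
      exact (if_pos hiR).ge.trans
        (single_le_sum (f := fun j => if R j a then μ a else 0) (fun j _ => zero_le) hiA)
  · simp [hQ]

lemma prEvent_fst_eq_and [Fintype α] [Fintype β] (μ : PMF (α × β)) (a : α)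
    (Q : β → Prop) :
    prEvent μ (fun w => w.1 = a ∧ Q w.2) = ∑ b, if Q b then μ (a, b) else 0 := by
  rw [prEvent, tsum_fintype, Fintype.sum_prod_type, sum_eq_single a]
  · simp
  · intro a' _ ha'
    simp [ha']
  · simp

end Probability

lemma sum_powerset_superset_pow_mul_pow {ι R : Type*} [CommRing R] [DecidableEq ι]
    {S P : Finset ι} (hS : S ⊆ P) (p : R) :
    ∑ T ∈ P.powerset with S ⊆ T, p ^ #T * (1 - p) ^ #(P \ T) = p ^ #S := by
  have h := prod_add (fun _ => p) (fun i => if i ∈ S then 0 else 1 - p) P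
  have hprod : ∏ i ∈ P, (p + if i ∈ S then 0 else 1 - p) = p ^ #S := by
    rw [prod_congr rfl (g := fun i => if i ∈ S then p else 1) fun i _ => by
      split_ifs <;> ring, prod_ite_mem, inter_eq_right.2 hS, prod_const]
  have hterm : ∀ T ∈ P.powerset,
      (∏ _i ∈ T, p) * ∏ i ∈ P \ T, (if i ∈ S then 0 else 1 - p) =
        if S ⊆ T then p ^ #T * (1 - p) ^ #(P \ T) else 0 := by
    intro T _
    rw [prod_const]
    split_ifs with hST
    · rw [prod_congr rfl fun i hi => if_neg fun hiS => (mem_sdiff.1 hi).2 (hST hiS),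
        prod_const]
    · obtain ⟨i, hiS, hiT⟩ := not_subset.1 hST
      rw [prod_eq_zero (mem_sdiff.2 ⟨hS hiS, hiT⟩) (by simp [hiS]), mul_zero]
  rw [sum_filter, ← sum_congr rfl hterm, ← h, hprod]

lemma sdiff_le_compl_right {α : Type*} [BooleanAlgebra α] (a b : α) : a \ b ≤ bᶜ :=
  le_compl_iff_disjoint_right.2 disjoint_sdiff_self_left

lemma edgeCount_eq_card (G : SimpleGraph (Fin n)) : edgeCount G = #G.edgeFinset := by
  simp [edgeCount, edgeFinset, Set.ncard_eq_toFinset_card']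

lemma card_edgeFinset_compl (G : SimpleGraph (Fin n)) :
    #Gᶜ.edgeFinset = n.choose 2 - #G.edgeFinset := by
  have h : Gᶜ.edgeFinset = (⊤ : SimpleGraph (Fin n)).edgeFinset \ G.edgeFinset := by
    ext e
    induction e with | _ a b => simp
  rw [h, card_sdiff_of_subset (edgeFinset_mono le_top), card_edgeFinset_top_eq_card_choose_two,
    Fintype.card_fin]

lemma disjoint_edgeFinset_compl (G : SimpleGraph (Fin n)) :
    Disjoint Gᶜ.edgeFinset G.edgeFinset := by
  rw [← disjoint_coe, coe_edgeFinset, coe_edgeFinset, disjoint_edgeSet]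
  exact disjoint_compl_left

lemma edgeSet_fromEdgeSet_of_subset {K : SimpleGraph (Fin n)} {T : Finset (Sym2 (Fin n))}
    (hT : T ⊆ Kᶜ.edgeFinset) : (fromEdgeSet (T : Set (Sym2 (Fin n)))).edgeSet = T := by
  rw [edgeSet_fromEdgeSet, sdiff_eq_left, Set.disjoint_left]
  exact fun e he => Kᶜ.not_isDiag_of_mem_edgeSet (mem_edgeFinset.1 (hT he))

lemma card_edgeFinset_sdiff_of_le {K F : SimpleGraph (Fin n)} (h : K ≤ F) :
    #(F \ K).edgeFinset = edgeCount F - edgeCount K := by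
  rw [edgeFinset_sdiff, card_sdiff_of_subset (edgeFinset_mono h), edgeCount_eq_card,
    edgeCount_eq_card]

lemma card_edgeFinset_compl_sdiff_of_le {K F : SimpleGraph (Fin n)} (h : K ≤ F) :
    #(Kᶜ.edgeFinset \ (F \ K).edgeFinset) = n.choose 2 - edgeCount F := by
  have hK := card_le_card (edgeFinset_mono h)
  have hF : #F.edgeFinset ≤ n.choose 2 := by simpa using F.card_edgeFinset_le_card_choose_two
  rw [card_sdiff_of_subset (edgeFinset_mono (sdiff_le_compl_right F K)),
    card_edgeFinset_sdiff_of_le h, card_edgeFinset_compl, edgeCount_eq_card, edgeCount_eq_card]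
  omega

lemma sum_supergraph_weight (K : SimpleGraph (Fin n)) {S : Finset (Sym2 (Fin n))}
    (hS : S ⊆ Kᶜ.edgeFinset) (p : ℝ) :
    ∑ F with K ≤ F ∧ S ⊆ F.edgeFinset,
      p ^ (edgeCount F - edgeCount K) * (1 - p) ^ (n.choose 2 - edgeCount F) = p ^ #S := by
  rw [← sum_powerset_superset_pow_mul_pow hS p]
  refine sum_nbij' (fun F => (F \ K).edgeFinset) (fun T => K ⊔ fromEdgeSet T)
    ?_ ?_ ?_ ?_ ?_
  · intro F hF
    simp only [mem_filter, mem_univ, true_and, mem_powerset] at hF ⊢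
    refine ⟨edgeFinset_mono (sdiff_le_compl_right F K), ?_⟩
    rw [edgeFinset_sdiff, subset_sdiff]
    exact ⟨hF.2, disjoint_of_subset_left hS (disjoint_edgeFinset_compl K)⟩
  · intro T hT
    simp only [mem_filter, mem_univ, true_and, mem_powerset] at hT ⊢
    refine ⟨le_sup_left, ?_⟩
    rw [← coe_subset, coe_edgeFinset, edgeSet_sup, edgeSet_fromEdgeSet_of_subset hT.1]
    exact (coe_subset.2 hT.2).trans Set.subset_union_right
  · intro F hF
    simp only [mem_filter, mem_univ, true_and] at hF
    simp only [coe_edgeFinset, fromEdgeSet_edgeSet]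
    exact sup_sdiff_cancel_right hF.1
  · intro T hT
    simp only [mem_filter, mem_powerset] at hT
    have hdisj : Disjoint K (fromEdgeSet (T : Set (Sym2 (Fin n)))) := by
      rw [← disjoint_edgeSet, edgeSet_fromEdgeSet_of_subset hT.1, ← coe_edgeFinset,
        disjoint_coe]
      exact disjoint_of_subset_right hT.1 (disjoint_edgeFinset_compl K).symm
    apply coe_injective
    rw [coe_edgeFinset, sup_sdiff_left_self, sdiff_eq_self_iff_disjoint.2 hdisj,
      edgeSet_fromEdgeSet_of_subset hT.1]
  · intro F hF
    simp only [mem_filter, mem_univ, true_and] at hF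
    rw [card_edgeFinset_sdiff_of_le hF.1, card_edgeFinset_compl_sdiff_of_le hF.1]

lemma IsRegAddGnp.prEvent_fst_eq_and_subset {ν : PMF (SimpleGraph (Fin n) × SimpleGraph (Fin n))}
    {d : ℕ} {p : ℝ} (hν : IsRegAddGnp ν d p) (hp0 : 0 ≤ p) (hp1 : p ≤ 1)
    {K : SimpleGraph (Fin n)} (hK : IsRegularGraph K d) {S : Finset (Sym2 (Fin n))}
    (hS : S ⊆ Kᶜ.edgeFinset) :
    prEvent ν (fun w => w.1 = K ∧ S ⊆ w.2.edgeFinset) =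
      ({G : SimpleGraph (Fin n) | IsRegularGraph G d}.ncard : ℝ≥0∞)⁻¹ *
        ENNReal.ofReal (p ^ #S) := by
  rw [prEvent_fst_eq_and ν K (S ⊆ ·.edgeFinset), ← sum_supergraph_weight K hS p,
    ENNReal.ofReal_sum_of_nonneg fun F _ => by positivity, mul_sum, sum_filter]
  refine sum_congr rfl fun F _ => ?_
  rw [hν]
  by_cases hKF : K ≤ F <;> by_cases hSF : S ⊆ F.edgeFinset <;> simp [hK, hKF, hSF]

lemma deg_eq_degree (G : SimpleGraph (Fin n)) (v : Fin n) : deg G v = G.degree v := by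
  rw [deg, Nat.card_eq_fintype_card, degree, neighborFinset,
    Set.toFinset_card]

lemma card_finsets_card_le (hn : 1 ≤ n) (s : ℕ) :
    #{U : Finset (Fin n) | #U ≤ s} ≤ (s + 1) * n ^ s := by
  calc #{U : Finset (Fin n) | #U ≤ s}
      ≤ #((range (s + 1)).biUnion fun j => powersetCard j (univ : Finset (Fin n))) :=
        card_le_card fun U hU => by
          simp only [mem_filter, mem_univ, true_and] at hU
          simpa [Nat.lt_succ_iff] using hU
    _ ≤ #(range (s + 1)) * n ^ s := card_biUnion_le_card_mul _ _ _ fun j hj => by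
        rw [card_powersetCard, card_univ, Fintype.card_fin]
        exact (Nat.choose_le_pow n j).trans
          (Nat.pow_le_pow_right hn (Nat.lt_succ_iff.1 (mem_range.1 hj)))
    _ = (s + 1) * n ^ s := by rw [card_range]

lemma card_union_nbhd_le {K : SimpleGraph (Fin n)} {d : ℕ} (hK : ∀ v, deg K v ≤ d)
    (U' : Finset (Fin n)) : #(U' ∪ (nbhd K ↑U').toFinset) ≤ (d + 1) * #U' := by
  have hnbhd : #(nbhd K ↑U').toFinset ≤ #U' * d := by
    calc #(nbhd K ↑U').toFinset ≤ #(U'.biUnion fun u => K.neighborFinset u) :=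
          card_le_card fun v hv => by
            obtain ⟨u, hu, huv⟩ := (Set.mem_toFinset.1 hv).2
            exact mem_biUnion.2 ⟨u, hu, (K.mem_neighborFinset u v).2 huv⟩
      _ ≤ #U' * d := card_biUnion_le_card_mul _ _ _ fun u _ => by
          rw [K.card_neighborFinset_eq_degree, ← deg_eq_degree]
          exact hK u
  calc #(U' ∪ (nbhd K ↑U').toFinset) ≤ #U' + #U' * d := (card_union_le _ _).trans (by omega)
    _ = (d + 1) * #U' := by ring

lemma choose_mul_pow_le (N k : ℕ) {p : ℝ} (hp : 0 ≤ p) :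
    (N.choose k : ℝ) * p ^ k ≤ (Real.exp 1 * N * p / k) ^ k := by
  rcases Nat.eq_zero_or_pos k with rfl | hk
  · simp
  have hk' : (0 : ℝ) < k := Nat.cast_pos.2 hk
  have hfact : (k : ℝ) ^ k ≤ Real.exp 1 ^ k * k.factorial := by
    rw [← Real.exp_nat_mul, mul_one, ← div_le_iff₀ (by positivity)]
    exact Real.pow_div_factorial_le_exp (x := k) hk'.le k
  calc (N.choose k : ℝ) * p ^ k ≤ (N ^ k / k.factorial) * p ^ k := by
        gcongr
        exact Nat.choose_le_pow_div k N
    _ ≤ (Real.exp 1 * N * p / k) ^ k := by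
        rw [div_pow, mul_pow, mul_pow, le_div_iff₀ (by positivity)]
        calc (N : ℝ) ^ k / k.factorial * p ^ k * k ^ k
            ≤ (N : ℝ) ^ k / k.factorial * p ^ k * (Real.exp 1 ^ k * k.factorial) := by gcongr
          _ = Real.exp 1 ^ k * N ^ k * p ^ k := by field_simp

def CoveredSetsSparse (d : ℕ) (s a : ℝ) (w : SimpleGraph (Fin n) × SimpleGraph (Fin n)) :
    Prop :=
  ∀ U : Set (Fin n), (U.ncard : ℝ) ≤ s →
    (∃ U' : Set (Fin n), (U'.ncard : ℝ) ≤ 4 * U.ncard / d ∧ U ⊆ U' ∪ nbhd w.1 U') →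
      (edgesWithin (w.2 \ w.1) U : ℝ) ≤ a * U.ncard

def witnessSizes (n d : ℕ) (s : ℝ) : Finset ℕ :=
  {u ∈ range (n + 1) | d ≤ 4 * u ∧ (u : ℝ) ≤ s}

/-- Triples `(U', U, S)` that certify a failure of `CoveredSetsSparse` at `(K, F)` once
`S ⊆ E(F)`. -/
def witnesses (K : SimpleGraph (Fin n)) (d u : ℕ) :
    Finset (Finset (Fin n) × Finset (Fin n) × Finset (Sym2 (Fin n))) :=
  {t | #t.1 * d ≤ 4 * u ∧ #t.2.1 = u ∧ t.2.1 ⊆ t.1 ∪ (nbhd K ↑t.1).toFinset ∧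
    t.2.2 ⊆ Kᶜ.edgeFinset ∩ t.2.1.sym2 ∧ #t.2.2 = 50 * u}

lemma edgesWithin_coe (G : SimpleGraph (Fin n)) (U : Finset (Fin n)) :
    edgesWithin G ↑U = #(G.edgeFinset ∩ U.sym2) := by
  rw [edgesWithin, ← Set.ncard_coe_finset]
  congr 1
  ext e
  simp only [Set.mem_ofPred_eq, coe_inter, coe_edgeFinset, Set.mem_inter_iff, mem_coe,
    mem_sym2_iff]

lemma exists_witness_of_not_coveredSetsSparse {K F : SimpleGraph (Fin n)} {d : ℕ} {s a : ℝ}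
    (hd : 0 < d) (ha : 50 ≤ a) (h : ¬ CoveredSetsSparse d s a (K, F)) :
    ∃ u ∈ witnessSizes n d s, ∃ t ∈ witnesses K d u, t.2.2 ⊆ F.edgeFinset := by
  simp only [CoveredSetsSparse, not_forall, not_le] at h
  obtain ⟨U, hUs, ⟨U', hU'U, hcover⟩, hdense⟩ := h
  lift U to Finset (Fin n) using U.toFinite
  lift U' to Finset (Fin n) using U'.toFinite
  simp only [Set.ncard_coe_finset] at hUs hU'U hdense
  have hd' : (0 : ℝ) < d := Nat.cast_pos.2 hd
  have hU' : U'.Nonempty := by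
    rw [nonempty_iff_ne_empty]
    rintro rfl
    have hU : U = ∅ := by simpa [nbhd] using hcover
    subst hU
    rw [coe_empty, ← coe_empty, edgesWithin_coe] at hdense
    simp at hdense
  have hU'U : #U' * d ≤ 4 * #U := by
    rw [le_div_iff₀ hd'] at hU'U
    exact_mod_cast hU'U
  have hdU : d ≤ 4 * #U := le_trans (Nat.le_mul_of_pos_left d hU'.card_pos) hU'U
  have hS : 50 * #U ≤ edgesWithin (F \ K) ↑U := by
    have : (50 * #U : ℝ) < edgesWithin (F \ K) ↑U :=
      lt_of_le_of_lt (mul_le_mul_of_nonneg_right ha (Nat.cast_nonneg _)) hdense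
    exact_mod_cast this.le
  obtain ⟨S, hSsub, hScard⟩ := exists_subset_card_eq (hS.trans_eq (edgesWithin_coe _ U))
  have hSK : S ⊆ Kᶜ.edgeFinset ∩ U.sym2 ∧ S ⊆ F.edgeFinset := by
    simp only [subset_iff, mem_inter, mem_edgeFinset] at hSsub ⊢
    exact ⟨fun e he => ⟨edgeSet_mono (sdiff_le_compl_right F K) (hSsub he).1, (hSsub he).2⟩,
      fun e he => edgeSet_mono sdiff_le (hSsub he).1⟩
  refine ⟨#U, ?_, (U', U, S), ?_, ?_⟩
  · simp only [witnessSizes, mem_filter, mem_range, Nat.lt_succ_iff]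
    exact ⟨(card_le_univ U).trans_eq (Fintype.card_fin n), hdU, hUs⟩
  · refine mem_filter.2 ⟨mem_univ _, hU'U, rfl, fun v hv => ?_,
      hSK.1, hScard⟩
    simpa using hcover hv
  · exact hSK.2

lemma card_witnesses_le {K : SimpleGraph (Fin n)} {d : ℕ} (hK : ∀ v, deg K v ≤ d) (hd : 0 < d)
    (hn : 1 ≤ n) (u : ℕ) :
    #(witnesses K d u) ≤ (4 * u / d + 1) * n ^ (4 * u / d) *
      (2 ^ (8 * u) * ((u + 1).choose 2).choose (50 * u)) := by
  set s := 4 * u / d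
  have hcover : ∀ U' ∈ ({U' | #U' ≤ s} : Finset (Finset (Fin n))),
      #(U' ∪ (nbhd K ↑U').toFinset) ≤ 8 * u := fun U' hU' => by
    have hU'd := (Nat.le_div_iff_mul_le hd).1 (mem_filter.1 hU').2
    have hU'u : #U' ≤ 4 * u := (mem_filter.1 hU').2.trans (Nat.div_le_self _ _)
    exact (card_union_nbhd_le hK U').trans (by nlinarith)
  calc #(witnesses K d u)
      ≤ #(({U' | #U' ≤ s} : Finset (Finset (Fin n))).biUnion fun U' =>
          (powersetCard u (U' ∪ (nbhd K ↑U').toFinset)).biUnion fun U =>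
            (powersetCard (50 * u) U.sym2).image fun S => (U', U, S)) := by
        refine card_le_card fun t ht => ?_
        obtain ⟨h1, h2, h3, h4, h5⟩ := (mem_filter.1 ht).2
        simp only [mem_biUnion, mem_image, mem_filter, mem_univ, true_and, mem_powersetCard]
        exact ⟨t.1, (Nat.le_div_iff_mul_le hd).2 h1, t.2.1, ⟨h3, h2⟩, t.2.2,
          ⟨h4.trans inter_subset_right, h5⟩, rfl⟩
    _ ≤ #({U' | #U' ≤ s} : Finset (Finset (Fin n))) *
          (2 ^ (8 * u) * ((u + 1).choose 2).choose (50 * u)) := by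
        refine card_biUnion_le_card_mul _ _ _ fun U' hU' => ?_
        refine (card_biUnion_le_card_mul _ _ (((u + 1).choose 2).choose (50 * u))
          fun U hU => ?_).trans ?_
        · rw [mem_powersetCard] at hU
          refine card_image_le.trans ?_
          rw [card_powersetCard, card_sym2, hU.2]
        · rw [card_powersetCard]
          exact Nat.mul_le_mul_right _
            ((Nat.choose_le_two_pow _ _).trans (Nat.pow_le_pow_right two_pos (hcover U' hU')))
    _ ≤ (s + 1) * n ^ s * (2 ^ (8 * u) * ((u + 1).choose 2).choose (50 * u)) :=
        Nat.mul_le_mul_right _ (card_finsets_card_le hn s)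

lemma pos_of_mul_log_le {d : ℕ} {C : ℝ} (hn : 2 ≤ n) (hC : 0 < C)
    (hd : C * Real.log n ≤ d) : 0 < d :=
  Nat.cast_pos.1 (hd.trans_lt' (mul_pos hC (Real.log_pos (by exact_mod_cast hn))))

lemma succ_mul_pow_le_pow_two_mul (hn : 2 ≤ n) (s : ℕ) : (s + 1) * n ^ s ≤ n ^ (2 * s) :=
  calc (s + 1) * n ^ s ≤ 2 ^ s * n ^ s := Nat.mul_le_mul_right _ s.lt_two_pow_self
    _ ≤ n ^ s * n ^ s := Nat.mul_le_mul_right _ (Nat.pow_le_pow_left hn s)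
    _ = n ^ (2 * s) := by ring

lemma choose_choose_two_mul_pow_le {u : ℕ} {p : ℝ} (hu : 1 ≤ u) (hp : 0 ≤ p)
    (hup : u * p ≤ 1) :
    ((((u + 1).choose 2).choose (50 * u) : ℕ) : ℝ) * p ^ (50 * u) ≤
      Real.exp (-1) ^ (50 * u) := by
  refine (choose_mul_pow_le _ _ hp).trans (pow_le_pow_left₀ (by positivity) ?_ _)
  have hu' : (1 : ℝ) ≤ u := by exact_mod_cast hu
  have hup' : ((u : ℝ) + 1) * u * p ≤ 2 * u := by nlinarith
  rw [div_le_iff₀ (by push_cast; linarith), Nat.cast_choose_two]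
  push_cast
  rw [add_sub_cancel_right]
  nlinarith [mul_le_mul_of_nonneg_left hup' (Real.exp_pos 1).le, Real.exp_one_lt_d9,
    Real.exp_neg_one_gt_d9]

lemma witness_weight_le {d u : ℕ} {p : ℝ} (hn : 2 ≤ n) (hd : 100 * Real.log n ≤ d)
    (hdu : d ≤ 4 * u) (hp : 0 ≤ p) (hup : u * p ≤ 1) :
    (((4 * u / d + 1) * n ^ (4 * u / d) * (2 ^ (8 * u) * ((u + 1).choose 2).choose (50 * u)) :
      ℕ) : ℝ) * p ^ (50 * u) ≤ (1 / 2) ^ u / n ^ 1000 := by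
  set s := 4 * u / d
  set L := Real.log n
  have hd0 := pos_of_mul_log_le hn (by norm_num) hd
  have hsd : (s : ℝ) * d ≤ 4 * u := by exact_mod_cast Nat.div_mul_le_self (4 * u) d
  have hsL : 2 * s * L ≤ u / 10 := by nlinarith [(Nat.cast_nonneg s : (0 : ℝ) ≤ s)]
  have hLu : 1000 * L ≤ 40 * u := by
    have : (d : ℝ) ≤ 4 * u := by exact_mod_cast hdu
    linarith
  have hpow (x : ℝ) (k : ℕ) (hx : 0 < x) : x ^ k = Real.exp (k * Real.log x) := by
    rw [Real.exp_nat_mul, Real.exp_log hx]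
  rw [one_div_pow, div_div, le_div_iff₀ (by positivity)]
  calc _ = (((s + 1) * n ^ s : ℕ) : ℝ) * 2 ^ (8 * u) *
        ((((u + 1).choose 2).choose (50 * u) : ℕ) * p ^ (50 * u)) * (2 ^ u * n ^ 1000) := by
        push_cast
        ring
    _ ≤ ((n ^ (2 * s) : ℕ) : ℝ) * 2 ^ (8 * u) * Real.exp (-1) ^ (50 * u) *
        (2 ^ u * n ^ 1000) := by
        gcongr
        · exact_mod_cast succ_mul_pow_le_pow_two_mul hn s
        · exact choose_choose_two_mul_pow_le (by omega) hp hup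
    _ = Real.exp (2 * s * L + 9 * u * Real.log 2 - 50 * u + 1000 * L) := by
        push_cast
        rw [hpow n _ (by positivity), hpow n _ (by positivity), hpow 2 _ two_pos,
          hpow 2 _ two_pos, ← Real.exp_nat_mul]
        simp only [← Real.exp_add]
        congr 1
        push_cast
        ring
    _ ≤ 1 := by
        have hlog2 := mul_le_mul_of_nonneg_left Real.log_two_lt_d9.le (Nat.cast_nonneg' u)
        exact Real.exp_le_one_iff.2 (by linarith)

lemma sum_witnesses_pow_le {K : SimpleGraph (Fin n)} {d : ℕ} {p s : ℝ}
    (hK : ∀ v, deg K v ≤ d) (hn : 2 ≤ n) (hd : 100 * Real.log n ≤ d) (hp : 0 ≤ p)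
    (hsp : s * p ≤ 1) :
    ∑ u ∈ witnessSizes n d s, ∑ t ∈ witnesses K d u, p ^ #t.2.2 ≤ 2 / n ^ 1000 := by
  have hd0 := pos_of_mul_log_le hn (by norm_num) hd
  calc ∑ u ∈ witnessSizes n d s, ∑ t ∈ witnesses K d u, p ^ #t.2.2
      = ∑ u ∈ witnessSizes n d s, (#(witnesses K d u) : ℝ) * p ^ (50 * u) :=
        sum_congr rfl fun u _ => by
          rw [sum_congr rfl fun t ht => by rw [(mem_filter.1 ht).2.2.2.2.2], sum_const,
            nsmul_eq_mul]
    _ ≤ ∑ u ∈ witnessSizes n d s, (1 / 2) ^ u / (n : ℝ) ^ 1000 := by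
        refine sum_le_sum fun u hu => ?_
        obtain ⟨hdu, hus⟩ := (mem_filter.1 hu).2
        refine (mul_le_mul_of_nonneg_right ?_ (pow_nonneg hp _)).trans
          (witness_weight_le hn hd hdu hp ((mul_le_mul_of_nonneg_right hus hp).trans hsp))
        exact_mod_cast card_witnesses_le hK hd0 (by omega) u
    _ ≤ ∑ u ∈ range (n + 1), (1 / 2) ^ u / (n : ℝ) ^ 1000 :=
        sum_le_sum_of_subset_of_nonneg (filter_subset _ _) fun _ _ _ => by positivity
    _ ≤ 2 / n ^ 1000 := by
        rw [← sum_div]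
        gcongr
        exact sum_geometric_two_le _

theorem IsRegAddGnp.prEvent_not_coveredSetsSparse_le
    {ν : PMF (SimpleGraph (Fin n) × SimpleGraph (Fin n))} {d : ℕ} {p s a : ℝ}
    (hν : IsRegAddGnp ν d p) (hp0 : 0 ≤ p) (hp1 : p ≤ 1) (hn : 2 ≤ n)
    (hd : 100 * Real.log n ≤ d) (hsp : s * p ≤ 1) (ha : 50 ≤ a) :
    prEvent ν (fun w => ¬ CoveredSetsSparse d s a w) ≤ ENNReal.ofReal (2 / n ^ 1000) := by
  have hd0 := pos_of_mul_log_le hn (by norm_num) hd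
  set R : Finset (SimpleGraph (Fin n)) := {K | IsRegularGraph K d}
  have hR : (#R : ℝ≥0∞) = {G : SimpleGraph (Fin n) | IsRegularGraph G d}.ncard := by
    rw [Set.ncard_eq_toFinset_card', Set.toFinset_ofPred]
  set N := ({G : SimpleGraph (Fin n) | IsRegularGraph G d}.ncard : ℝ≥0∞)
  calc prEvent ν (fun w => ¬ CoveredSetsSparse d s a w)
      ≤ ∑ i ∈ R.sigma fun K => (witnessSizes n d s).sigma (witnesses K d),
          prEvent ν (fun w => w.1 = i.1 ∧ i.2.2.2.2 ⊆ w.2.edgeFinset) := by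
        refine prEvent_le_sum ν _ _ fun w hw hbad => ?_
        have hreg : IsRegularGraph w.1 d := by
          by_contra h
          exact hw (by rw [hν w, if_neg fun h' => h h'.1])
        obtain ⟨u, hu, t, ht, hS⟩ := exists_witness_of_not_coveredSetsSparse hd0 ha hbad
        exact ⟨⟨w.1, u, t⟩,
          mem_sigma.2 ⟨mem_filter.2 ⟨mem_univ _, hreg⟩, mem_sigma.2 ⟨hu, ht⟩⟩, rfl, hS⟩
    _ = ∑ K ∈ R, N⁻¹ * ENNReal.ofReal
          (∑ u ∈ witnessSizes n d s, ∑ t ∈ witnesses K d u, p ^ #t.2.2) := by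
        rw [sum_sigma]
        refine sum_congr rfl fun K hK => ?_
        rw [sum_sigma,
          ENNReal.ofReal_sum_of_nonneg fun _ _ => sum_nonneg fun _ _ => by positivity, mul_sum]
        refine sum_congr rfl fun u _ => ?_
        rw [ENNReal.ofReal_sum_of_nonneg fun _ _ => by positivity, mul_sum]
        refine sum_congr rfl fun t ht => ?_
        exact hν.prEvent_fst_eq_and_subset hp0 hp1 (mem_filter.1 hK).2
          ((mem_filter.1 ht).2.2.2.2.1.trans inter_subset_left)
    _ ≤ ∑ K ∈ R, N⁻¹ * ENNReal.ofReal (2 / n ^ 1000) := by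
        refine sum_le_sum fun K hK => ?_
        gcongr
        exact sum_witnesses_pow_le (fun v => ((mem_filter.1 hK).2 v).le) hn hd hp0 hsp
    _ ≤ ENNReal.ofReal (2 / n ^ 1000) := by
        rw [sum_const, nsmul_eq_mul, ← mul_assoc, hR]
        exact mul_le_of_le_one_left zero_le (ENNReal.mul_inv_le_one N)

lemma sq_div_four_le_choose_two_sub {n d : ℕ} (h : 2 * d + 2 ≤ n) :
    (n : ℝ) ^ 2 / 4 ≤ n.choose 2 - d * n / 2 := by
  have h' : (2 * d + 2 : ℝ) ≤ n := by exact_mod_cast h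
  rw [Nat.cast_choose_two]
  nlinarith

lemma four_mul_le_sq_of_le_rpow {n : ℕ} {m σ : ℝ} (hn : 16 ≤ n) (hσ : σ ≤ 1 / 2)
    (hm : m ≤ (n : ℝ) ^ ((1 : ℝ) + σ)) : 4 * m ≤ (n : ℝ) ^ 2 := by
  have hn' : (16 : ℝ) ≤ n := by exact_mod_cast hn
  calc 4 * m ≤ 4 * (n : ℝ) ^ ((3 : ℝ) / 2) := by
        gcongr
        exact hm.trans (Real.rpow_le_rpow_of_exponent_le (by linarith) (by linarith))
    _ ≤ √n * (n : ℝ) ^ ((3 : ℝ) / 2) := by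
        gcongr
        exact (Real.le_sqrt (by norm_num) (by positivity)).2 (by linarith)
    _ = (n : ℝ) ^ 2 := by
        rw [Real.sqrt_eq_rpow, ← Real.rpow_add (by positivity), ← Real.rpow_natCast]
        norm_num

lemma edge_probability_bounds {n d m : ℕ} {σ p : ℝ} (hn : 16 ≤ n) (hdn : 2000 * d ≤ n)
    (hσ : σ ≤ 1 / 2) (hm : m ≤ (n : ℝ) ^ ((1 : ℝ) + σ))
    (hp : p = m / ((n.choose 2 : ℝ) - d * n / 2)) :
    0 ≤ p ∧ p ≤ 1 ∧ p * n ≤ 2 * (2 * m / n) := by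
  have hD := sq_div_four_le_choose_two_sub (by omega : 2 * d + 2 ≤ n)
  have hn' : (0 : ℝ) < n := by positivity
  have hp4 : p ≤ 4 * m / (n : ℝ) ^ 2 := by
    rw [hp, div_le_div_iff₀ (hD.trans_lt' (by positivity)) (by positivity)]
    nlinarith
  refine ⟨hp ▸ div_nonneg (Nat.cast_nonneg m) (hD.trans' (by positivity)),
    hp4.trans ((div_le_one (by positivity)).2 (four_mul_le_sq_of_le_rpow hn hσ hm)), ?_⟩
  calc p * n ≤ 4 * m / (n : ℝ) ^ 2 * n := by gcongr
    _ = 2 * (2 * m / n) := by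
        field_simp
        ring

lemma two_div_pow_le_div_pow {n : ℕ} {c : ℝ} (hc : 0 < c) (hn : ⌈2 / c⌉₊ ≤ n) :
    2 / (n : ℝ) ^ 1000 ≤ c / (n : ℝ) ^ 14 := by
  have hcn : 2 ≤ c * n := by
    have := (div_le_iff₀' hc).1 ((Nat.le_ceil (2 / c)).trans (Nat.cast_le.2 hn))
    linarith
  have hn1 : (1 : ℝ) ≤ n := by
    exact_mod_cast (Nat.ceil_pos.2 (by positivity : 0 < 2 / c)).trans_le hn
  rw [div_le_div_iff₀ (by positivity) (by positivity)]
  calc 2 * (n : ℝ) ^ 14 ≤ c * n * n ^ 14 := by gcongr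
    _ ≤ c * n ^ 1000 := by
        rw [mul_assoc, ← pow_succ']
        gcongr
        norm_num

/-- **Lemma 6.6.** There is `c* > 0` such that for every `ε ∈ (0,1]` and every
`σ ∈ (0,c*]` there is `C > 0` such that for every `c > 0` and all sufficiently large `n`:
with `(log n)⁻³ ≤ λ ≤ c*`, `10³d ≤ λn`, `d ≥ C log n`, `dn` even, `ε d n ≤ m ≤ n^{1+σ}`,
`δ = 2m/n` with `λδ ≥ C log n`, `p = m(binom(n,2) − dn/2)⁻¹`, and `(K,F)` with
`K ~ G_d(n)`, `F = K + E`, with probability at least `1 − c n⁻¹⁴`: for each `U` with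
`|U| ≤ λn/(100 δ log n)`, if there is `U'` with `|U'| ≤ 4|U|/d` and `U ⊆ U' ∪ N_K(U')`,
then `e_{F∖K}(U) ≤ (λ/(2 log n))·δ|U|`. -/
theorem gnp_expansion_edges :
    ∃ cstar : ℝ, 0 < cstar ∧
      ∀ ε : ℝ, 0 < ε → ε ≤ 1 →
        ∀ σ : ℝ, 0 < σ → σ ≤ cstar →
          ∃ C : ℝ, 0 < C ∧
            ∀ c : ℝ, 0 < c →
              ∃ n₀ : ℕ, ∀ n : ℕ, n₀ ≤ n →
                ∀ lam : ℝ, ∀ d m : ℕ,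
                  ((Real.log n) ^ 3)⁻¹ ≤ lam → lam ≤ cstar →
                  10 ^ 3 * (d : ℝ) ≤ lam * n → C * Real.log n ≤ (d : ℝ) → Even (d * n) →
                  ε * d * n ≤ (m : ℝ) → (m : ℝ) ≤ (n : ℝ) ^ ((1 : ℝ) + σ) →
                  ∀ δ p : ℝ, δ = 2 * (m : ℝ) / n → C * Real.log n ≤ lam * δ →
                    p = (m : ℝ) / ((n.choose 2 : ℝ) - d * n / 2) →
                    ∀ ν : PMF (SimpleGraph (Fin n) × SimpleGraph (Fin n)),
                      IsRegAddGnp ν d p →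
                      ENNReal.ofReal (1 - c / (n : ℝ) ^ 14) ≤
                        prEvent ν (fun w =>
                          ∀ U : Set (Fin n),
                            (U.ncard : ℝ) ≤ lam * n / (100 * δ * Real.log n) →
                            (∃ U' : Set (Fin n), (U'.ncard : ℝ) ≤ 4 * U.ncard / d ∧
                                U ⊆ U' ∪ nbhd w.1 U') →
                              (edgesWithin (w.2 \ w.1) U : ℝ) ≤
                                lam / (2 * Real.log n) * δ * U.ncard) := by
  refine ⟨1 / 2, by norm_num, fun ε _ _ σ _ hσ => ⟨100, by norm_num, fun c hc =>
    ⟨max 16 ⌈2 / c⌉₊, ?_⟩⟩⟩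
  intro n hn lam d m hlam hlam' hdn hd _ _ hm δ p hδ hlamδ hp ν hν
  obtain ⟨hn16, hnc⟩ := max_le_iff.1 hn
  have hL : 1 ≤ Real.log n := by
    have hn' : (16 : ℝ) ≤ n := by exact_mod_cast hn16
    rw [Real.le_log_iff_exp_le (by positivity)]
    linarith [Real.exp_one_lt_d9]
  have hlam0 : 0 < lam := lt_of_lt_of_le (by positivity) hlam
  have hδ0 : 0 < δ := pos_of_mul_pos_right (hlamδ.trans_lt' (by positivity)) hlam0.le
  obtain ⟨hp0, hp1, hpn⟩ := edge_probability_bounds hn16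
    (by exact_mod_cast (by nlinarith : (2000 * d : ℝ) ≤ n)) hσ hm hp
  have hsp : lam * n / (100 * δ * Real.log n) * p ≤ 1 := by
    rw [div_mul_eq_mul_div, div_le_one (by positivity)]
    nlinarith [mul_le_mul_of_nonneg_left (hδ ▸ hpn) hlam0.le]
  have ha : 50 ≤ lam / (2 * Real.log n) * δ := by
    rw [div_mul_eq_mul_div, le_div_iff₀ (by positivity)]
    linarith
  exact ofReal_one_sub_le_prEvent ν _ (by positivity)
    ((hν.prEvent_not_coveredSetsSparse_le hp0 hp1 (by omega) hd hsp ha).trans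
      (ENNReal.ofReal_le_ofReal (two_div_pow_le_div_pow hc hnc)))

end Sandwich
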